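/- (Identity for M^s) For every n ∈ ℕ, M^s(n) = ∑_{k=0}^{⌊(n+1)/2⌋} n!·(n+1−k)!/(k!·(n−k)!·k!·(n+1−2k)!), which equals ∑_{k=0}^{⌊(n+1)/2⌋} (n choose k)·((n+1−k) choose k). -/
import Mathlib

/-- The Motzkin numbers: `M 0 = 1`, `M 1 = 1` and, for `n ≥ 2`,
`M n = M (n-1) + ∑_{i=0}^{n-2} M i * M (n-2-i)`. -/
def motzkin : ℕ → ℕ
  | 0 => 1
  | 1 => 1
  | n + 2 =>
      motzkin (n + 1) +
        ∑ i ∈ (Finset.range (n + 1)).attach, motzkin i.1 * motzkin (n - i.1)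
decreasing_by
  all_goals
    first
      | omega
      | (have h := Finset.mem_range.mp i.2; omega)

/-- `Ms 0 = 1`, `Ms 1 = 2` and, for `n ≥ 2`,
`Ms n = Ms (n-1) + M (n-1) + 2 * ∑_{i=0}^{n-2} M i * Ms (n-2-i)`. -/
def Ms : ℕ → ℕ
  | 0 => 1
  | 1 => 2
  | n + 2 =>
      Ms (n + 1) + motzkin (n + 1) +
        2 * ∑ i ∈ (Finset.range (n + 1)).attach, motzkin i.1 * Ms (n - i.1)
decreasing_by
  all_goals
    first
      | omega
      | (have h := Finset.mem_range.mp i.2; omega)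

/-! ### Auxiliary definitions: trinomial coefficients -/

/-- `cc a b` is `a.choose b` for an integer index `b` (zero if `b < 0`). -/
def cc (a : ℕ) (b : ℤ) : ℕ := if 0 ≤ b then a.choose b.toNat else 0

/-- `bin n m` is the trinomial coefficient: the coefficient of `x^m` in `(1 + x + x^2)^n`. -/
def bin (n : ℕ) (m : ℤ) : ℕ :=
  ∑ k ∈ Finset.range (n + 1), n.choose k * cc (n - k) (m - 2 * k)

/-- `Bz n j` is the trinomial coefficient at offset `j` from the center position `n`. -/
def Bz (n : ℕ) (j : ℤ) : ℤ := (bin n (n + j) : ℤ)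

/-- `D n j` is the number of nonnegative lattice paths (steps `-1, 0, 1`) of length `n`
from `0` to `j`, expressed as a difference of trinomial coefficients. -/
def D (n : ℕ) (j : ℤ) : ℤ := (bin n (n + j) : ℤ) - bin n (n + j + 2)

/-! ### Basic lemmas on `cc` and `bin` -/

lemma cc_neg {a : ℕ} {b : ℤ} (h : b < 0) : cc a b = 0 := by
  simp [cc, not_le.mpr h]

lemma cc_congr {a : ℕ} {b b' : ℤ} (h : b = b') : cc a b = cc a b' := by rw [h]

lemma cc_pascal (a : ℕ) (b : ℤ) : cc (a + 1) b = cc a (b - 1) + cc a b := by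
  rcases lt_trichotomy b 0 with h | h | h
  · rw [cc_neg h, cc_neg h, cc_neg (by omega)]
  · subst h; simp [cc]
  · have h1 : (0:ℤ) ≤ b - 1 := by omega
    have h2 : b.toNat = (b-1).toNat + 1 := by omega
    simp only [cc, if_pos h1, if_pos (le_of_lt h), h2]
    rw [Nat.choose_succ_succ]

lemma bin_congr {n : ℕ} {m m' : ℤ} (h : m = m') : bin n m = bin n m' := by rw [h]

lemma bin_neg {n : ℕ} {m : ℤ} (h : m < 0) : bin n m = 0 := by
  apply Finset.sum_eq_zero
  intro k _
  rw [cc_neg (by omega), mul_zero]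

lemma bin_pascal (n : ℕ) (m : ℤ) :
    bin (n + 1) m = bin n m + bin n (m - 1) + bin n (m - 2) := by
  have key : bin n m + bin n (m - 1) =
      ∑ k ∈ Finset.range (n + 1), n.choose k * cc (n - k + 1) (m - 2 * k) := by
    rw [bin, bin, ← Finset.sum_add_distrib]
    refine Finset.sum_congr rfl fun k _ => ?_
    rw [cc_pascal, mul_add, cc_congr (show m - 2*k - 1 = m - 1 - 2*k by ring), add_comm]
  rw [key, bin, bin]
  rw [Finset.sum_range_succ' (fun k => (n+1).choose k * cc (n + 1 - k) (m - 2 * k)) (n+1)]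
  rw [Finset.sum_range_succ' (fun k => n.choose k * cc (n - k + 1) (m - 2 * k)) n]
  simp only [Nat.choose_succ_succ, Nat.succ_sub_succ, Nat.choose_zero_right, one_mul,
    Nat.sub_zero, Nat.cast_zero, mul_zero, sub_zero, add_mul]
  rw [Finset.sum_add_distrib]
  have h1 : ∑ i ∈ Finset.range (n+1), n.choose i * cc (n - i) (m - 2 * (i+1:ℕ)) =
      ∑ k ∈ Finset.range (n+1), n.choose k * cc (n - k) (m - 2 - 2 * k) := by
    refine Finset.sum_congr rfl fun k _ => ?_
    exact congrArg _ (cc_congr (by push_cast; ring))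
  have h2 : ∑ i ∈ Finset.range (n+1), n.choose (i+1) * cc (n - i) (m - 2 * (i+1:ℕ)) =
      ∑ i ∈ Finset.range n, n.choose (i+1) * cc (n - (i+1) + 1) (m - 2 * (i+1:ℕ)) := by
    rw [Finset.sum_range_succ, Nat.choose_succ_self, zero_mul, add_zero]
    refine Finset.sum_congr rfl fun i hi => ?_
    have : n - (i+1) + 1 = n - i := by
      have := Finset.mem_range.mp hi; omega
    rw [this]
  rw [h1, h2]
  ring

lemma bin_zero (m : ℤ) : bin 0 m = if m = 0 then 1 else 0 := by
  simp only [bin, zero_add, Finset.sum_range_one, cc, Nat.choose_zero_right, one_mul,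
    Nat.cast_zero, Nat.zero_sub]
  rcases lt_trichotomy m 0 with h | h | h
  · rw [if_neg (by omega : ¬ (0:ℤ) ≤ m - 2*0), if_neg (by omega : ¬ m = 0)]
  · subst h; norm_num
  · rw [if_neg (by omega : ¬ m = 0), if_pos (by omega : (0:ℤ) ≤ m - 2*0)]
    rw [Nat.choose_eq_zero_of_lt (by omega : 0 < (m - 2*0).toNat)]

lemma bin_symm (n : ℕ) (m : ℤ) : bin n m = bin n (2 * n - m) := by
  induction n generalizing m with
  | zero => rw [bin_zero, bin_zero]; simp only [Nat.cast_zero]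
            by_cases h : m = 0
            · simp [h]
            · rw [if_neg h, if_neg (by omega)]
  | succ n ih =>
    rw [bin_pascal, bin_pascal]
    rw [ih m, ih (m-1), ih (m-2)]
    rw [bin_congr (show 2*(n:ℤ) - m = 2*(n+1:ℕ) - m - 2 by push_cast; ring),
        bin_congr (show 2*(n:ℤ) - (m-1) = 2*(n+1:ℕ) - m - 1 by push_cast; ring),
        bin_congr (show 2*(n:ℤ) - (m-2) = 2*(n+1:ℕ) - m by push_cast; ring)]
    ring

/-! ### Basic lemmas on `D` -/

lemma D_congr {n : ℕ} {j j' : ℤ} (h : j = j') : D n j = D n j' := by rw [h]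

lemma D_pascal (n : ℕ) (j : ℤ) : D (n + 1) j = D n (j - 1) + D n j + D n (j + 1) := by
  simp only [D]
  rw [bin_pascal n (((n+1:ℕ):ℤ) + j), bin_pascal n (((n+1:ℕ):ℤ) + j + 2)]
  rw [bin_congr (show ((n+1:ℕ):ℤ) + j = (n:ℤ) + (j+1) by push_cast; ring),
      bin_congr (show ((n+1:ℕ):ℤ) + j - 1 = (n:ℤ) + j by push_cast; ring),
      bin_congr (show ((n+1:ℕ):ℤ) + j - 2 = (n:ℤ) + (j-1) by push_cast; ring),
      bin_congr (show ((n+1:ℕ):ℤ) + j + 2 = (n:ℤ) + (j+1) + 2 by push_cast; ring),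
      bin_congr (show ((n+1:ℕ):ℤ) + j + 2 - 1 = (n:ℤ) + j + 2 by push_cast; ring),
      bin_congr (show ((n+1:ℕ):ℤ) + j + 2 - 2 = (n:ℤ) + (j-1) + 2 by push_cast; ring)]
  push_cast
  ring

lemma D_neg_one (n : ℕ) : D n (-1) = 0 := by
  simp only [D]
  rw [bin_symm n ((n:ℤ) + -1),
      bin_congr (show 2*(n:ℤ) - ((n:ℤ) + -1) = (n:ℤ) + -1 + 2 by ring)]
  ring

lemma D_zero (j : ℤ) (hj : -1 ≤ j) : D 0 j = if j = 0 then 1 else 0 := by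
  simp only [D, bin_zero]
  by_cases h : j = 0
  · subst h; norm_num
  · rw [if_neg (by omega : ¬ ((0:ℕ):ℤ) + j = 0),
        if_neg (by omega : ¬ ((0:ℕ):ℤ) + j + 2 = 0), if_neg h]
    norm_num

/-! ### Recurrence unfolding lemmas -/

lemma motzkin_zero : motzkin 0 = 1 := by rw [motzkin]
lemma motzkin_one : motzkin 1 = 1 := by rw [motzkin]
lemma Ms_zero : Ms 0 = 1 := by rw [Ms]
lemma Ms_one : Ms 1 = 2 := by rw [Ms]

lemma motzkin_add_two (n : ℕ) : motzkin (n + 2) =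
    motzkin (n + 1) + ∑ i ∈ Finset.range (n + 1), motzkin i * motzkin (n - i) := by
  rw [motzkin, Finset.sum_attach (Finset.range (n+1)) (fun i => motzkin i * motzkin (n - i))]

lemma Ms_add_two (n : ℕ) : Ms (n + 2) =
    Ms (n + 1) + motzkin (n + 1) + 2 * ∑ i ∈ Finset.range (n + 1), motzkin i * Ms (n - i) := by
  rw [Ms, Finset.sum_attach (Finset.range (n+1)) (fun i => motzkin i * Ms (n - i))]

/-! ### Motzkin numbers as ballot-type path counts -/

lemma D_one_j (j : ℤ) (hj : 0 ≤ j) : D 1 j = if j = 0 ∨ j = 1 then 1 else 0 := by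
  have h : D (0+1) j = D 0 (j-1) + D 0 j + D 0 (j+1) := D_pascal 0 j
  rw [show (1:ℕ) = 0+1 from rfl, h, D_zero (j-1) (by omega), D_zero j (by omega),
      D_zero (j+1) (by omega)]
  by_cases h0 : j = 0
  · simp [h0]
  · by_cases h1 : j = 1
    · subst h1; norm_num
    · rw [if_neg (by omega), if_neg h0, if_neg (by omega), if_neg (by tauto)]
      norm_num

lemma B_base : ∀ j : ℕ, (∑ i ∈ Finset.range 1, (motzkin i : ℤ) * D (0 - i) j) = D 1 (j + 1) := by
  intro j
  rw [Finset.sum_range_one, motzkin_zero, D_one_j _ (by positivity), D_zero (j:ℤ) (by omega)]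
  norm_num
  by_cases h0 : j = 0
  · simp [h0]
  · rw [if_neg h0, if_neg (by push_neg; exact ⟨by omega, h0⟩)]

lemma B_step (m : ℕ)
    (hA : (motzkin (m + 1) : ℤ) = D (m + 1) 0)
    (hB : ∀ j : ℕ, (∑ i ∈ Finset.range (m + 1), (motzkin i : ℤ) * D (m - i) j) = D (m + 1) (j + 1)) :
    ∀ j : ℕ, (∑ i ∈ Finset.range (m + 2), (motzkin i : ℤ) * D (m + 1 - i) j) = D (m + 2) (j + 1) := by
  intro j
  have hsp : D (m+2) ((j:ℤ)+1) = D (m+1) ((j:ℤ)+1-1) + D (m+1) ((j:ℤ)+1) + D (m+1) ((j:ℤ)+1+1) :=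
    D_pascal (m+1) ((j:ℤ)+1)
  rw [show m+2 = (m+1)+1 from rfl, Finset.sum_range_succ, Nat.sub_self]
  have hsplit : ∀ i ∈ Finset.range (m+1), (motzkin i:ℤ) * D (m+1-i) (j:ℤ) =
      (motzkin i:ℤ) * D (m-i) ((j:ℤ)-1) + ((motzkin i:ℤ) * D (m-i) (j:ℤ)
        + (motzkin i:ℤ) * D (m-i) ((j:ℤ)+1)) := by
    intro i hi
    have hi' := Finset.mem_range.mp hi
    rw [show m+1-i = (m-i)+1 by omega, D_pascal (m-i) j]
    ring
  rw [Finset.sum_congr rfl hsplit, Finset.sum_add_distrib, Finset.sum_add_distrib]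
  have s3 : ∑ i ∈ Finset.range (m+1), (motzkin i:ℤ) * D (m-i) ((j:ℤ)+1) = D (m+1) ((j+1:ℕ)+1) := by
    rw [← hB (j+1)]
    exact Finset.sum_congr rfl fun i _ => by
      rw [D_congr (by push_cast; ring : ((j:ℤ)+1) = ((j+1:ℕ):ℤ))]
  rw [s3, hB j, hsp]
  cases j with
  | zero =>
    have s1 : ∑ i ∈ Finset.range (m+1), (motzkin i:ℤ) * D (m-i) (((0:ℕ):ℤ)-1) = 0 :=
      Finset.sum_eq_zero fun i _ => by
        rw [D_congr (by norm_num : (((0:ℕ):ℤ)-1) = -1), D_neg_one, mul_zero]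
    rw [s1, D_zero ((0:ℕ):ℤ) (by norm_num)]
    rw [hA] at *
    push_cast
    ring_nf
  | succ j' =>
    have s1 : ∑ i ∈ Finset.range (m+1), (motzkin i:ℤ) * D (m-i) (((j'+1:ℕ):ℤ)-1) = D (m+1) ((j':ℕ)+1) := by
      rw [← hB j']
      exact Finset.sum_congr rfl fun i _ => by
        rw [D_congr (by push_cast; ring : (((j'+1:ℕ):ℤ)-1) = ((j':ℕ):ℤ))]
    rw [s1, D_zero ((j'+1:ℕ):ℤ) (by omega), if_neg (by push_cast; omega : ¬ ((j'+1:ℕ):ℤ) = 0)]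
    push_cast
    ring

/-- The Motzkin numbers count nonnegative paths, and the first-passage convolution identity. -/
lemma motzD (n : ℕ) : ((motzkin n : ℤ) = D n 0) ∧
    (∀ j : ℕ, (∑ i ∈ Finset.range (n + 1), (motzkin i : ℤ) * D (n - i) j) = D (n + 1) (j + 1)) := by
  induction n using Nat.strong_induction_on with
  | _ n ih =>
  have hA : (motzkin n : ℤ) = D n 0 := by
    match n, ih with
    | 0, _ => rw [motzkin_zero, D_zero 0 (by norm_num)]; norm_num
    | 1, _ => rw [motzkin_one, D_one_j 0 le_rfl]; norm_num
    | (m+2), ih =>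
      have h1 : (motzkin (m+1) : ℤ) = D (m+1) 0 := (ih (m+1) (by omega)).1
      have h2 := (ih m (by omega)).2 0
      have h3 : ∀ i ∈ Finset.range (m+1), (motzkin i:ℤ) * (motzkin (m-i):ℤ)
          = (motzkin i:ℤ) * D (m-i) ((0:ℕ):ℤ) := fun i hi => by
        rw [Nat.cast_zero, ← (ih (m-i) (by have := Finset.mem_range.mp hi; omega)).1]
      have h4 : D (m+2) 0 = D (m+1) ((0:ℤ)-1) + D (m+1) 0 + D (m+1) ((0:ℤ)+1) := D_pascal (m+1) 0
      rw [motzkin_add_two]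
      push_cast
      rw [Finset.sum_congr rfl h3, h2, h1, h4,
          D_congr (by norm_num : ((0:ℤ)-1) = -1), D_neg_one]
      push_cast
      ring
  refine ⟨hA, ?_⟩
  match n, hA, ih with
  | 0, _, _ => exact B_base
  | (m+1), hA, ih => exact B_step m hA ((ih m (by omega)).2)

/-! ### Lemmas on `Bz` -/

lemma Bz_congr {n : ℕ} {j j' : ℤ} (h : j = j') : Bz n j = Bz n j' := by rw [h]

lemma Bz_pascal (n : ℕ) (j : ℤ) : Bz (n + 1) j = Bz n (j - 1) + Bz n j + Bz n (j + 1) := by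
  simp only [Bz]
  rw [bin_pascal n (((n+1:ℕ):ℤ) + j),
      bin_congr (show ((n+1:ℕ):ℤ) + j = (n:ℤ) + (j+1) by push_cast; ring),
      bin_congr (show ((n+1:ℕ):ℤ) + j - 1 = (n:ℤ) + j by push_cast; ring),
      bin_congr (show ((n+1:ℕ):ℤ) + j - 2 = (n:ℤ) + (j-1) by push_cast; ring)]
  push_cast
  ring

lemma Bz_neg_one (n : ℕ) : Bz n (-1) = Bz n 1 := by
  simp only [Bz]
  rw [bin_symm n ((n:ℤ) + -1), bin_congr (show 2*(n:ℤ) - ((n:ℤ) + -1) = (n:ℤ) + 1 by ring)]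

lemma Bz_zero (j : ℤ) : Bz 0 j = if j = 0 then 1 else 0 := by
  simp only [Bz, bin_zero]
  by_cases h : j = 0
  · simp [h]
  · rw [if_neg (by push_cast; omega), if_neg h]
    norm_num

lemma motzkin_eq_Bz (n : ℕ) : (motzkin n : ℤ) = Bz n 0 - Bz n 2 := by
  rw [(motzD n).1]
  simp only [D, Bz]
  rw [bin_congr (show (n:ℤ) + 0 + 2 = (n:ℤ) + 2 by ring)]

/-- Convolution of Motzkin numbers with central trinomial coefficients. -/
lemma convB (n : ℕ) : ∀ j : ℕ,
    (∑ i ∈ Finset.range (n + 1), (motzkin i : ℤ) * Bz (n - i) j) = Bz (n + 1) ((j : ℤ) + 1) := by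
  induction n with
  | zero =>
    intro j
    rw [Finset.sum_range_one, motzkin_zero, Nat.sub_zero,
        show (1:ℕ) = 0+1 from rfl, Bz_pascal, Bz_zero, Bz_zero, Bz_zero,
        Bz_zero]
    push_cast
    split_ifs <;> omega
  | succ n ih =>
    intro j
    rw [show n+1+1 = (n+1)+1 from rfl, Finset.sum_range_succ, Nat.sub_self]
    have hsplit : ∀ i ∈ Finset.range (n+1), (motzkin i:ℤ) * Bz (n+1-i) (j:ℤ) =
        (motzkin i:ℤ) * Bz (n-i) ((j:ℤ) - 1)
          + ((motzkin i:ℤ) * Bz (n-i) (j:ℤ) + (motzkin i:ℤ) * Bz (n-i) ((j:ℤ) + 1)) := by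
      intro i hi
      have hi' := Finset.mem_range.mp hi
      rw [show n+1-i = (n-i)+1 by omega, Bz_pascal (n-i) (j:ℤ)]
      ring
    rw [Finset.sum_congr rfl hsplit, Finset.sum_add_distrib, Finset.sum_add_distrib]
    have s2 := ih j
    have s3 : ∑ i ∈ Finset.range (n+1), (motzkin i:ℤ) * Bz (n-i) ((j:ℤ)+1) = Bz (n+1) ((j:ℤ)+2) := by
      have := ih (j+1)
      rw [Bz_congr (show ((j+1:ℕ):ℤ) + 1 = (j:ℤ) + 2 by push_cast; ring)] at this
      rw [← this]
      exact Finset.sum_congr rfl fun i _ => by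
        rw [Bz_congr (show (j:ℤ) + 1 = ((j+1:ℕ):ℤ) by push_cast; ring)]
    have hrhs : Bz ((n+1)+1) ((j:ℤ)+1) = Bz (n+1) (j:ℤ) + Bz (n+1) ((j:ℤ)+1) + Bz (n+1) ((j:ℤ)+2) := by
      rw [Bz_pascal (n+1) ((j:ℤ)+1), Bz_congr (show (j:ℤ)+1-1 = (j:ℤ) by ring),
          Bz_congr (show (j:ℤ)+1+1 = (j:ℤ)+2 by ring)]
    rw [s2, s3, hrhs]
    cases j with
    | zero =>
      have s1 : ∑ i ∈ Finset.range (n+1), (motzkin i:ℤ) * Bz (n-i) (((0:ℕ):ℤ) - 1) = Bz (n+1) 2 := by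
        have := ih 1
        rw [Bz_congr (show ((1:ℕ):ℤ) + 1 = (2:ℤ) by norm_num)] at this
        rw [← this]
        exact Finset.sum_congr rfl fun i _ => by
          rw [Bz_congr (show ((0:ℕ):ℤ) - 1 = (-1:ℤ) by norm_num), Bz_neg_one,
              Bz_congr (show (1:ℤ) = ((1:ℕ):ℤ) by norm_num)]
      rw [s1, Bz_zero, if_pos (by norm_num),
          show (motzkin (n+1):ℤ) = Bz (n+1) 0 - Bz (n+1) 2 from motzkin_eq_Bz (n+1)]
      push_cast
      ring
    | succ j' =>
      have s1 : ∑ i ∈ Finset.range (n+1), (motzkin i:ℤ) * Bz (n-i) (((j'+1:ℕ):ℤ) - 1)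
          = Bz (n+1) (((j'+1:ℕ):ℤ)) := by
        have := ih j'
        rw [Bz_congr (show ((j':ℕ):ℤ) + 1 = ((j'+1:ℕ):ℤ) by push_cast; ring)] at this
        rw [← this]
        exact Finset.sum_congr rfl fun i _ => by
          rw [Bz_congr (show ((j'+1:ℕ):ℤ) - 1 = ((j':ℕ):ℤ) by push_cast; ring)]
      rw [s1, Bz_zero, if_neg (by push_cast; omega)]
      ring

lemma Bz_L1 (n : ℕ) : Bz (n + 1) 0 = Bz n 0 + 2 * Bz n 1 := by
  rw [Bz_pascal n 0, Bz_congr (show (0:ℤ) - 1 = -1 by ring), Bz_neg_one,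
      Bz_congr (show (0:ℤ) + 1 = 1 by ring)]
  ring

/-- The key identity: `2 * Ms n` is a sum of two central trinomial coefficients. -/
lemma twoMs (n : ℕ) : 2 * (Ms n : ℤ) = Bz n 0 + Bz (n + 1) 0 := by
  induction n using Nat.strong_induction_on with
  | _ n ih =>
  match n, ih with
  | 0, _ => rw [Ms_zero, Bz_L1 0, Bz_zero, Bz_zero]; norm_num
  | 1, _ =>
    rw [Ms_one, Bz_L1 1, Bz_L1 0,
        show Bz 1 1 = Bz 0 0 + Bz 0 1 + Bz 0 2 by
          rw [Bz_pascal 0 1, Bz_congr (show (1:ℤ) - 1 = 0 by ring),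
              Bz_congr (show (1:ℤ) + 1 = 2 by ring)],
        Bz_zero, Bz_zero, Bz_zero]
    norm_num
  | (n+2), ih =>
    have hc0 : (∑ i ∈ Finset.range (n + 1), (motzkin i : ℤ) * Bz (n - i) 0) = Bz (n + 1) 1 := by
      have h := convB n 0
      push_cast at h
      exact h
    have hc1 : (∑ i ∈ Finset.range (n + 2), (motzkin i : ℤ) * Bz (n + 1 - i) 0) = Bz (n + 2) 1 := by
      have h := convB (n+1) 0
      push_cast at h
      exact h
    rw [Finset.sum_range_succ, Nat.sub_self, Bz_zero, if_pos rfl, mul_one] at hc1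
    have key : ∀ i ∈ Finset.range (n + 1),
        2 * ((motzkin i : ℤ) * (Ms (n - i) : ℤ))
          = (motzkin i : ℤ) * Bz (n + 1 - i) 0 + (motzkin i : ℤ) * Bz (n - i) 0 := by
      intro i hi
      have hi' := Finset.mem_range.mp hi
      have h := ih (n - i) (by omega)
      rw [show n + 1 - i = n - i + 1 by omega]
      nlinarith [h]
    have h2 : 2 * (∑ i ∈ Finset.range (n + 1), (motzkin i : ℤ) * (Ms (n - i) : ℤ))
        = (∑ i ∈ Finset.range (n + 1), (motzkin i : ℤ) * Bz (n + 1 - i) 0)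
          + (∑ i ∈ Finset.range (n + 1), (motzkin i : ℤ) * Bz (n - i) 0) := by
      rw [Finset.mul_sum, Finset.sum_congr rfl key, Finset.sum_add_distrib]
    have IH1 := ih (n+1) (by omega)
    have hL1a := Bz_L1 (n+1)
    have hL1b := Bz_L1 (n+2)
    rw [Ms_add_two]
    push_cast
    linarith [h2, hc0, hc1, IH1, hL1a, hL1b]

/-! ### Converting to binomial sums -/

lemma cc_add_cc (n k : ℕ) (hk : k ≤ n) :
    cc (n - k) ((n:ℤ) - 2 * k) + cc (n - k) ((n:ℤ) + 1 - 2 * k) = (n + 1 - k).choose k := by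
  rcases lt_trichotomy (2 * k) (n + 1) with h | h | h
  · have h1 : (0:ℤ) ≤ (n:ℤ) - 2 * k := by omega
    have h2 : (0:ℤ) ≤ (n:ℤ) + 1 - 2 * k := by omega
    rw [cc, cc, if_pos h1, if_pos h2]
    have e1 : ((n:ℤ) - 2 * k).toNat = (n - k) - k := by omega
    have e2 : ((n:ℤ) + 1 - 2 * k).toNat = n + 1 - 2 * k := by omega
    rw [e1, e2, Nat.choose_symm (by omega : k ≤ n - k)]
    rcases Nat.eq_zero_or_pos k with hk0 | hk0
    · subst hk0
      rw [Nat.choose_eq_zero_of_lt (by omega : n - 0 < n + 1 - 2 * 0)]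
      simp
    · have e3 : n + 1 - 2 * k = (n - k) - (k - 1) := by omega
      rw [e3, Nat.choose_symm (by omega : k - 1 ≤ n - k)]
      have e4 : n + 1 - k = (n - k) + 1 := by omega
      have e5 := Nat.choose_succ_succ (n - k) (k - 1)
      simp only [Nat.succ_eq_add_one] at e5
      rw [show (k-1)+1 = k by omega] at e5
      rw [e4, e5]
      exact Nat.add_comm _ _
  · rw [cc, cc, if_neg (by omega), if_pos (by omega)]
    have e1 : ((n:ℤ) + 1 - 2 * k).toNat = 0 := by omega
    have e2 : n + 1 - k = k := by omega
    rw [e1, e2, Nat.choose_zero_right, Nat.choose_self]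
  · rw [cc, cc, if_neg (by omega), if_neg (by omega),
        Nat.choose_eq_zero_of_lt (by omega : n + 1 - k < k)]

lemma bin_add_bin (n : ℕ) : bin n (n:ℤ) + bin n ((n:ℤ) + 1)
    = ∑ k ∈ Finset.range (n + 1), n.choose k * (n + 1 - k).choose k := by
  rw [bin, bin, ← Finset.sum_add_distrib]
  refine Finset.sum_congr rfl fun k hk => ?_
  have hk' : k ≤ n := by have := Finset.mem_range.mp hk; omega
  rw [← mul_add, ← cc_add_cc n k hk']

lemma sum_trunc (n : ℕ) :
    ∑ k ∈ Finset.range (n + 1), n.choose k * (n + 1 - k).choose k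
      = ∑ k ∈ Finset.range ((n + 1) / 2 + 1), n.choose k * (n + 1 - k).choose k := by
  symm
  apply Finset.sum_subset
  · intro k hk
    simp only [Finset.mem_range] at *
    omega
  · intro k hk1 hk2
    simp only [Finset.mem_range] at *
    rw [Nat.choose_eq_zero_of_lt (by omega : n + 1 - k < k), mul_zero]

lemma Ms_eq_choose_sum (n : ℕ) :
    Ms n = ∑ k ∈ Finset.range ((n + 1) / 2 + 1), n.choose k * (n + 1 - k).choose k := by
  have h := twoMs n
  rw [Bz_L1 n] at h
  have hB0 : Bz n 0 = (bin n (n:ℤ) : ℤ) := by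
    rw [Bz, bin_congr (show (n:ℤ) + 0 = (n:ℤ) by ring)]
  have hB1 : Bz n 1 = (bin n ((n:ℤ) + 1) : ℤ) := rfl
  rw [hB0, hB1] at h
  have h2 : (Ms n : ℤ) = (bin n (n:ℤ) : ℤ) + (bin n ((n:ℤ)+1) : ℤ) := by linarith
  have h3 : Ms n = bin n (n:ℤ) + bin n ((n:ℤ)+1) := by exact_mod_cast h2
  rw [h3, bin_add_bin, sum_trunc]

lemma fact_form (n k : ℕ) (hk : k ≤ (n + 1) / 2) :
    n.factorial * (n + 1 - k).factorial /
        (k.factorial * (n - k).factorial * k.factorial * (n + 1 - 2 * k).factorial)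
      = n.choose k * (n + 1 - k).choose k := by
  have h1 : k ≤ n := by omega
  have h2 : k ≤ n + 1 - k := by omega
  rw [Nat.choose_eq_factorial_div_factorial h1, Nat.choose_eq_factorial_div_factorial h2,
      Nat.div_mul_div_comm (Nat.factorial_mul_factorial_dvd_factorial h1)
        (Nat.factorial_mul_factorial_dvd_factorial h2)]
  congr 1
  have e : n + 1 - k - k = n + 1 - 2 * k := by omega
  rw [e]
  ring

/-- Identity for `Ms`: for every `n`,
`Ms n = ∑_{k=0}^{⌊(n+1)/2⌋} n! (n+1-k)! / (k! (n-k)! k! (n+1-2k)!)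
      = ∑_{k=0}^{⌊(n+1)/2⌋} (n choose k) ⬝ ((n+1-k) choose k)`. -/
theorem Ms_closed_form (n : ℕ) :
    Ms n =
        ∑ k ∈ Finset.range ((n + 1) / 2 + 1),
          n.factorial * (n + 1 - k).factorial /
            (k.factorial * (n - k).factorial * k.factorial * (n + 1 - 2 * k).factorial) ∧
      Ms n = ∑ k ∈ Finset.range ((n + 1) / 2 + 1), n.choose k * (n + 1 - k).choose k := by
  have hc := Ms_eq_choose_sum n
  refine ⟨?_, hc⟩
  rw [hc]
  refine Finset.sum_congr rfl fun k hk => ?_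
  exact (fact_form n k (by have := Finset.mem_range.mp hk; omega)).symm
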